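/- Let p > 1 and x > 0. Then the function f₄(t) = cosh_p(x/t)^t is strictly decreasing on (0, ∞), and log f₄ is convex on (0, ∞). -/

import Mathlib

open Real Set Filter Topology

/-- Generalized inverse sine: `arcsin_p x = ∫₀ˣ (1 - tᵖ)^(-1/p) dt`. -/
noncomputable def arcsinp (p : ℝ) (x : ℝ) : ℝ := ∫ t in (0:ℝ)..x, (1 - t ^ p) ^ (-1 / p)

/-- Generalized π: `π_p = 2 · arcsin_p 1`. -/
noncomputable def pip (p : ℝ) : ℝ := 2 * arcsinp p 1

/-- Generalized sine: the inverse of `arcsinp p` (as a map from `[0,1]`). -/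
noncomputable def sinp (p : ℝ) : ℝ → ℝ := Function.invFunOn (arcsinp p) (Set.Icc 0 1)

/-- Generalized cosine. -/
noncomputable def cosp (p : ℝ) (x : ℝ) : ℝ := (1 - (sinp p x) ^ p) ^ (1 / p)

/-- Generalized tangent. -/
noncomputable def tanp (p : ℝ) (x : ℝ) : ℝ := sinp p x / cosp p x

/-- Generalized inverse hyperbolic sine: `arsinh_p x = ∫₀ˣ (1 + tᵖ)^(-1/p) dt`. -/
noncomputable def arsinhp (p : ℝ) (x : ℝ) : ℝ := ∫ t in (0:ℝ)..x, (1 + t ^ p) ^ (-1 / p)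

/-- Generalized hyperbolic sine: the inverse of `arsinhp p` (as a map from `[0,∞)`). -/
noncomputable def sinhp (p : ℝ) : ℝ → ℝ := Function.invFunOn (arsinhp p) (Set.Ici 0)

/-- Generalized hyperbolic cosine. -/
noncomputable def coshp (p : ℝ) (x : ℝ) : ℝ := (1 + (sinhp p x) ^ p) ^ (1 / p)

/-- Generalized hyperbolic tangent. -/
noncomputable def tanhp (p : ℝ) (x : ℝ) : ℝ := sinhp p x / coshp p x

/-!
Write `g = log ∘ cosh_p`, so that `log (cosh_p (x/t) ^ t) = t * g (x/t)` is the perspective of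
`g`. Since `sinh_p' = cosh_p` and `cosh_p ^ p = 1 + sinh_p ^ p`, one gets `g' = tanh_p ^ (p - 1)`,
which is strictly increasing for `p > 1`; hence `g` is strictly convex on `[0, ∞)` with `g 0 = 0`.
Perspectives of convex functions are convex, and `t * g (x/t) = x * (g u - g 0) / u` with
`u = x/t`: the secant slope of a strictly convex function through `0` increases with `u`, hence
decreases with `t`.
-/

open MeasureTheory

theorem ConvexOn.perspective {E : Type*} [AddCommGroup E] [Module ℝ E] {s : Set E} {g : E → ℝ}
    (hg : ConvexOn ℝ s g) {x : E} (hx : ∀ t : ℝ, 0 < t → t⁻¹ • x ∈ s) :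
    ConvexOn ℝ (Ioi 0) (fun t : ℝ => t * g (t⁻¹ • x)) := by
  refine ⟨convex_Ioi 0, fun a (ha : 0 < a) b (hb : 0 < b) μ ν hμ hν hμν => ?_⟩
  set t := μ • a + ν • b with ht_def
  have ht : 0 < t := convex_Ioi (0 : ℝ) ha hb hμ hν hμν
  have hsplit : t⁻¹ • x = (μ * a / t) • (a⁻¹ • x) + (ν * b / t) • (b⁻¹ • x) := by
    rw [smul_smul, smul_smul, ← add_smul]
    congr 1
    simp only [ht_def, smul_eq_mul] at ht ⊢
    field_simp
    exact hμν.symm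
  have hweights : μ * a / t + ν * b / t = 1 := by
    rw [← add_div, div_eq_one_iff_eq ht.ne']; rfl
  have hconv := hg.2 (hx a ha) (hx b hb) (by positivity) (by positivity) hweights
  rw [← hsplit, smul_eq_mul, smul_eq_mul] at hconv
  calc t * g (t⁻¹ • x)
      ≤ t * (μ * a / t * g (a⁻¹ • x) + ν * b / t * g (b⁻¹ • x)) :=
        mul_le_mul_of_nonneg_left hconv ht.le
    _ = μ • (a * g (a⁻¹ • x)) + ν • (b * g (b⁻¹ • x)) := by
        simp only [smul_eq_mul]; field_simp

theorem StrictConvexOn.strictAntiOn_mul_comp_div {g : ℝ → ℝ} (hg : StrictConvexOn ℝ (Ici 0) g)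
    (hg0 : g 0 = 0) {x : ℝ} (hx : 0 < x) : StrictAntiOn (fun t => t * g (x / t)) (Ioi 0) := by
  intro a (ha : 0 < a) b (hb : 0 < b) hab
  have hslope : (g (x / b) - g 0) / (x / b - 0) < (g (x / a) - g 0) / (x / a - 0) :=
    hg.secant_strict_mono self_mem_Ici (div_pos hx hb).le (div_pos hx ha).le
      (div_pos hx hb).ne' (div_pos hx ha).ne' (div_lt_div_of_pos_left hx ha hab)
  have hsecant :
      ∀ t, 0 < t → t * g (x / t) = x * ((g (x / t) - g 0) / (x / t - 0)) := by
    intro t ht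
    rw [hg0, sub_zero, sub_zero]
    field_simp
  simp only [hsecant b hb, hsecant a ha]
  exact mul_lt_mul_of_pos_left hslope hx

section arsinhp

variable {p : ℝ}

lemma one_add_rpow_pos {t : ℝ} (ht : 0 ≤ t) : 0 < 1 + t ^ p := by
  have := rpow_nonneg ht p; linarith

lemma continuousOn_arsinhp_integrand (hp : 0 < p) :
    ContinuousOn (fun t : ℝ => (1 + t ^ p) ^ (-1 / p)) (Ici 0) :=
  (continuousOn_const.add (continuousOn_id.rpow_const fun _ _ => Or.inr hp.le)).rpow_const
    fun _ ht => Or.inl (one_add_rpow_pos ht).ne'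

lemma intervalIntegrable_arsinhp_integrand (hp : 0 < p) {a b : ℝ} (ha : 0 ≤ a) (hb : 0 ≤ b) :
    IntervalIntegrable (fun t : ℝ => (1 + t ^ p) ^ (-1 / p)) volume a b :=
  ((continuousOn_arsinhp_integrand hp).mono fun _ ht =>
    (le_inf ha hb).trans ht.1).intervalIntegrable

lemma arsinhp_zero : arsinhp p 0 = 0 := intervalIntegral.integral_same

lemma arsinhp_sub_arsinhp (hp : 0 < p) {a b : ℝ} (ha : 0 ≤ a) (hb : 0 ≤ b) :
    arsinhp p b - arsinhp p a = ∫ t in a..b, (1 + t ^ p) ^ (-1 / p) :=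
  intervalIntegral.integral_interval_sub_left (intervalIntegrable_arsinhp_integrand hp le_rfl hb)
    (intervalIntegrable_arsinhp_integrand hp le_rfl ha)

lemma arsinhp_strictMonoOn (hp : 0 < p) : StrictMonoOn (arsinhp p) (Ici 0) := by
  intro a ha b hb hab
  have hint : 0 < ∫ t in a..b, (1 + t ^ p) ^ (-1 / p) :=
    intervalIntegral.intervalIntegral_pos_of_pos_on
      (intervalIntegrable_arsinhp_integrand hp ha hb)
      (fun t ht => rpow_pos_of_pos (one_add_rpow_pos ((mem_Ici.1 ha).trans ht.1.le)) _) hab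
  linarith [arsinhp_sub_arsinhp hp ha hb]

lemma arsinhp_nonneg (hp : 0 < p) {a : ℝ} (ha : 0 ≤ a) : 0 ≤ arsinhp p a :=
  arsinhp_zero (p := p) ▸ (arsinhp_strictMonoOn hp).monotoneOn self_mem_Ici ha ha

lemma continuousOn_arsinhp_Icc (hp : 0 < p) {x : ℝ} (hx : 0 ≤ x) :
    ContinuousOn (arsinhp p) (Icc 0 x) := by
  have := intervalIntegral.continuousOn_primitive_interval'
    (intervalIntegrable_arsinhp_integrand hp le_rfl hx) left_mem_uIcc
  rwa [uIcc_of_le hx] at this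

lemma hasDerivAt_arsinhp (hp : 0 < p) {y : ℝ} (hy : 0 < y) :
    HasDerivAt (arsinhp p) ((1 + y ^ p) ^ (-1 / p)) y := by
  have hcont : ContinuousOn (fun t : ℝ => (1 + t ^ p) ^ (-1 / p)) (Ioi 0) :=
    (continuousOn_arsinhp_integrand hp).mono Ioi_subset_Ici_self
  exact intervalIntegral.integral_hasDerivAt_right
    (intervalIntegrable_arsinhp_integrand hp le_rfl hy.le)
    (hcont.stronglyMeasurableAtFilter isOpen_Ioi y hy) (hcont.continuousAt (Ioi_mem_nhds hy))

/-- The integrand dominates `(1 + t)⁻¹` because `‖(1, t)‖_p ≤ ‖(1, t)‖_1`. -/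
lemma log_one_add_le_arsinhp (hp : 1 ≤ p) {x : ℝ} (hx : 0 ≤ x) : log (1 + x) ≤ arsinhp p x := by
  have hbound : ∀ t ∈ Icc 0 x, (1 + t)⁻¹ ≤ (1 + t ^ p) ^ (-1 / p) := by
    intro t ht
    have hnorm : (1 + t ^ p) ^ (1 / p) ≤ 1 + t := by
      simpa only [one_rpow] using rpow_add_rpow_le_add zero_le_one ht.1 hp
    rw [neg_div, rpow_neg (one_add_rpow_pos ht.1).le]
    exact inv_anti₀ (rpow_pos_of_pos (one_add_rpow_pos ht.1) _) hnorm
  have hint : ∫ t in (0 : ℝ)..x, (1 + t)⁻¹ = log (1 + x) := by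
    rw [intervalIntegral.integral_comp_add_left (fun t => t⁻¹), add_zero,
      integral_inv_of_pos one_pos (by linarith), div_one]
  rw [← hint]
  refine intervalIntegral.integral_mono_on hx ?_ (intervalIntegrable_arsinhp_integrand
    (by linarith) le_rfl hx) hbound
  have hcont : ContinuousOn (fun t : ℝ => 1 + t) (Icc 0 x) := by fun_prop
  exact (hcont.inv₀ fun t ht => (by linarith [ht.1] : (0 : ℝ) < 1 + t).ne')
    |>.intervalIntegrable_of_Icc hx

lemma tendsto_arsinhp_atTop (hp : 1 ≤ p) : Tendsto (arsinhp p) atTop atTop := by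
  refine tendsto_atTop_mono' atTop ?_
    (tendsto_log_atTop.comp (tendsto_atTop_add_const_left atTop 1 tendsto_id))
  filter_upwards [eventually_ge_atTop 0] with x hx
  exact log_one_add_le_arsinhp hp hx

lemma surjOn_arsinhp (hp : 1 ≤ p) : SurjOn (arsinhp p) (Ici 0) (Ici 0) := by
  intro y hy
  obtain ⟨x, hxy, hx⟩ :=
    (((tendsto_arsinhp_atTop hp).eventually_ge_atTop y).and (eventually_ge_atTop 0)).exists
  have hivt := intermediate_value_Icc hx (continuousOn_arsinhp_Icc (zero_lt_one.trans_le hp) hx)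
  rw [arsinhp_zero] at hivt
  exact image_mono Icc_subset_Ici_self (hivt ⟨hy, hxy⟩)

end arsinhp

section sinhp

variable {p : ℝ}

lemma sinhp_nonneg (hp : 1 ≤ p) {y : ℝ} (hy : 0 ≤ y) : 0 ≤ sinhp p y :=
  Function.invFunOn_mem (surjOn_arsinhp hp hy)

lemma arsinhp_sinhp (hp : 1 ≤ p) {y : ℝ} (hy : 0 ≤ y) : arsinhp p (sinhp p y) = y :=
  Function.invFunOn_eq (surjOn_arsinhp hp hy)

lemma sinhp_arsinhp (hp : 0 < p) {a : ℝ} (ha : 0 ≤ a) : sinhp p (arsinhp p a) = a :=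
  (arsinhp_strictMonoOn hp).injOn.leftInvOn_invFunOn ha

lemma sinhp_zero (hp : 0 < p) : sinhp p 0 = 0 := by
  simpa only [arsinhp_zero] using sinhp_arsinhp hp (le_refl 0)

lemma sinhp_strictMonoOn (hp : 1 ≤ p) : StrictMonoOn (sinhp p) (Ici 0) := by
  intro a ha b hb hab
  rwa [← (arsinhp_strictMonoOn (zero_lt_one.trans_le hp)).lt_iff_lt (sinhp_nonneg hp ha)
    (sinhp_nonneg hp hb), arsinhp_sinhp hp ha, arsinhp_sinhp hp hb]

lemma sinhp_pos (hp : 1 ≤ p) {y : ℝ} (hy : 0 < y) : 0 < sinhp p y := by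
  simpa only [sinhp_zero (zero_lt_one.trans_le hp)] using
    sinhp_strictMonoOn hp self_mem_Ici hy.le hy

lemma image_sinhp_Ici (hp : 1 ≤ p) : sinhp p '' Ici 0 = Ici 0 := by
  have hp0 : 0 < p := zero_lt_one.trans_le hp
  refine Subset.antisymm (image_subset_iff.2 fun y hy => sinhp_nonneg hp hy) fun a ha => ?_
  exact ⟨arsinhp p a, arsinhp_nonneg hp0 ha, sinhp_arsinhp hp0 ha⟩

lemma continuousAt_sinhp (hp : 1 ≤ p) {y : ℝ} (hy : 0 < y) : ContinuousAt (sinhp p) y :=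
  (sinhp_strictMonoOn hp).continuousAt_of_image_mem_nhds (Ici_mem_nhds hy)
    (by rw [image_sinhp_Ici hp]; exact Ici_mem_nhds (sinhp_pos hp hy))

lemma continuousOn_sinhp (hp : 1 ≤ p) : ContinuousOn (sinhp p) (Ici 0) := by
  intro y hy
  rcases (mem_Ici.1 hy).eq_or_lt with rfl | hy
  · refine (sinhp_strictMonoOn hp).continuousWithinAt_right_of_image_mem_nhdsWithin
      self_mem_nhdsWithin ?_
    rw [image_sinhp_Ici hp, sinhp_zero (zero_lt_one.trans_le hp)]
    exact self_mem_nhdsWithin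
  · exact (continuousAt_sinhp hp hy).continuousWithinAt

lemma hasDerivAt_sinhp (hp : 1 ≤ p) {y : ℝ} (hy : 0 < y) :
    HasDerivAt (sinhp p) (coshp p y) y := by
  have hS := sinhp_pos hp hy
  have hw := one_add_rpow_pos (p := p) hS.le
  have hinv : ∀ᶠ z in 𝓝 y, arsinhp p (sinhp p z) = z := by
    filter_upwards [Ioi_mem_nhds hy] with z hz
    exact arsinhp_sinhp hp (le_of_lt hz)
  have hd := (hasDerivAt_arsinhp (zero_lt_one.trans_le hp) hS).of_local_left_inverse
    (continuousAt_sinhp hp hy) (rpow_pos_of_pos hw _).ne' hinv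
  rwa [neg_div, rpow_neg hw.le, inv_inv] at hd

end sinhp

section coshp

variable {p : ℝ}

lemma coshp_pos (hp : 1 ≤ p) {y : ℝ} (hy : 0 ≤ y) : 0 < coshp p y :=
  rpow_pos_of_pos (one_add_rpow_pos (sinhp_nonneg hp hy)) _

lemma coshp_rpow (hp : 1 ≤ p) {y : ℝ} (hy : 0 ≤ y) : coshp p y ^ p = 1 + sinhp p y ^ p := by
  rw [coshp, ← rpow_mul (one_add_rpow_pos (sinhp_nonneg hp hy)).le,
    one_div_mul_cancel (zero_lt_one.trans_le hp).ne', rpow_one]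

lemma log_coshp_zero (hp : 1 ≤ p) : log (coshp p 0) = 0 := by
  have hp0 : 0 < p := zero_lt_one.trans_le hp
  rw [coshp, sinhp_zero hp0, zero_rpow hp0.ne', add_zero, one_rpow, log_one]

lemma continuousOn_log_coshp (hp : 1 ≤ p) : ContinuousOn (fun z => log (coshp p z)) (Ici 0) := by
  have hcosh : ContinuousOn (coshp p) (Ici 0) :=
    (continuousOn_const.add ((continuousOn_sinhp hp).rpow_const fun _ _ =>
      Or.inr (zero_le_one.trans hp))).rpow_const fun _ hz =>
        Or.inl (one_add_rpow_pos (sinhp_nonneg hp hz)).ne'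
  exact hcosh.log fun _ hz => (coshp_pos hp hz).ne'

lemma tanhp_nonneg (hp : 1 ≤ p) {y : ℝ} (hy : 0 ≤ y) : 0 ≤ tanhp p y :=
  div_nonneg (sinhp_nonneg hp hy) (coshp_pos hp hy).le

lemma tanhp_rpow (hp : 1 ≤ p) {y : ℝ} (hy : 0 ≤ y) :
    tanhp p y ^ p = sinhp p y ^ p / (1 + sinhp p y ^ p) := by
  rw [tanhp, div_rpow (sinhp_nonneg hp hy) (coshp_pos hp hy).le, coshp_rpow hp hy]

lemma tanhp_strictMonoOn (hp : 1 ≤ p) : StrictMonoOn (tanhp p) (Ici 0) := by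
  intro a ha b hb hab
  have hp0 : 0 < p := zero_lt_one.trans_le hp
  rw [← rpow_lt_rpow_iff (tanhp_nonneg hp ha) (tanhp_nonneg hp hb) hp0, tanhp_rpow hp ha,
    tanhp_rpow hp hb, div_lt_div_iff₀ (one_add_rpow_pos (sinhp_nonneg hp ha))
      (one_add_rpow_pos (sinhp_nonneg hp hb))]
  have := rpow_lt_rpow (sinhp_nonneg hp ha) (sinhp_strictMonoOn hp ha hb hab) hp0
  linarith

lemma hasDerivAt_log_coshp (hp : 1 ≤ p) {u : ℝ} (hu : 0 < u) :
    HasDerivAt (fun z => log (coshp p z)) (tanhp p u ^ (p - 1)) u := by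
  have hS := sinhp_pos hp hu
  have hC := coshp_pos hp hu.le
  have hd := (((hasDerivAt_sinhp hp hu).rpow_const (p := p) (Or.inl hS.ne')).const_add 1).log
    (one_add_rpow_pos hS.le).ne' |>.div_const p
  have hlog : (fun z => log (1 + sinhp p z ^ p) / p) =ᶠ[𝓝 u] fun z => log (coshp p z) := by
    filter_upwards [Ioi_mem_nhds hu] with z hz
    rw [coshp, log_rpow (one_add_rpow_pos (sinhp_nonneg hp (le_of_lt hz)))]
    ring
  refine (hd.congr_of_eventuallyEq hlog.symm).congr_deriv ?_
  rw [tanhp, div_rpow hS.le hC.le, rpow_sub_one hC.ne', coshp_rpow hp hu.le]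
  field_simp

lemma strictConvexOn_log_coshp (hp : 1 < p) :
    StrictConvexOn ℝ (Ici 0) (fun z => log (coshp p z)) := by
  refine StrictMonoOn.strictConvexOn_of_deriv (convex_Ici 0) (continuousOn_log_coshp hp.le) ?_
  rw [interior_Ici]
  intro a ha b hb hab
  rw [(hasDerivAt_log_coshp hp.le ha).deriv, (hasDerivAt_log_coshp hp.le hb).deriv]
  exact rpow_lt_rpow (tanhp_nonneg hp.le (le_of_lt ha))
    (tanhp_strictMonoOn hp.le (Ioi_subset_Ici_self ha) (Ioi_subset_Ici_self hb) hab) (sub_pos.2 hp)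

end coshp

theorem stmt19 (p : ℝ) (hp : 1 < p) (x : ℝ) (hx : 0 < x) :
    StrictAntiOn (fun t => coshp p (x / t) ^ t) (Set.Ioi 0) ∧
    ConvexOn ℝ (Set.Ioi 0) (fun t => Real.log (coshp p (x / t) ^ t)) := by
  have hg := strictConvexOn_log_coshp hp
  have hpos : ∀ t ∈ Ioi (0 : ℝ), 0 < coshp p (x / t) := fun t ht =>
    coshp_pos hp.le (div_pos hx ht).le
  have hlog : ∀ t ∈ Ioi (0 : ℝ), t * log (coshp p (x / t)) = log (coshp p (x / t) ^ t) :=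
    fun t ht => (log_rpow (hpos t ht) t).symm
  refine ⟨fun a ha b hb hab => ?_, ?_⟩
  · rw [← log_lt_log_iff (rpow_pos_of_pos (hpos b hb) b) (rpow_pos_of_pos (hpos a ha) a),
      ← hlog a ha, ← hlog b hb]
    exact hg.strictAntiOn_mul_comp_div (log_coshp_zero hp.le) hx ha hb hab
  · refine (hg.convexOn.perspective fun t ht => (smul_pos (inv_pos.2 ht) hx).le).congr
      fun t ht => ?_
    rw [← hlog t ht]
    simp only [smul_eq_mul, inv_mul_eq_div]
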